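/- Let B = [0,N1] × [0,N2] with N1, N2 > 0, let ℓ > 0, let Z ⊆ B be a zone, and let Q be a packing with every rectangle of Q contained in Z and of width at least 2ℓ. Let G be the conflict graph of Q and let C ⊆ Q be an st-separator in G. Set ℓ' = ℓ²/N1. Then the ℓ-rounded versions of the rectangles of Q ∖ C (width w replaced by ℓ'·⌈w/ℓ'⌉, height unchanged) can be packed inside the rounded zone ↔Z⟨ℓ⟩ = (⋃_{(x,y)∈Z} [x−ℓ, x+ℓ] × {y}) ∩ ([0, N1] × [0, N2]). -/

import Mathlib

/-- A placed axis-parallel rectangle `[x, x+w] × [y, y+h]`. -/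
structure PRect where
  x : ℝ
  y : ℝ
  w : ℝ
  h : ℝ

namespace PRect

/-- The rectangle as a subset of the plane. -/
def toSet (R : PRect) : Set (ℝ × ℝ) :=
  Set.Icc R.x (R.x + R.w) ×ˢ Set.Icc R.y (R.y + R.h)

/-- The (open) interior of a placed rectangle. -/
def inter (R : PRect) : Set (ℝ × ℝ) :=
  Set.Ioo R.x (R.x + R.w) ×ˢ Set.Ioo R.y (R.y + R.h)

/-- Two placed rectangles overlap if their interiors intersect. -/
def Overlap (R R' : PRect) : Prop := (R.inter ∩ R'.inter).Nonempty

/-- The rectangle has positive width and height. -/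
def Proper (R : PRect) : Prop := 0 < R.w ∧ 0 < R.h

/-- The left side `{x} × [y, y+h]`. -/
def leftSide (R : PRect) : Set (ℝ × ℝ) := {R.x} ×ˢ Set.Icc R.y (R.y + R.h)

/-- The right side `{x+w} × [y, y+h]`. -/
def rightSide (R : PRect) : Set (ℝ × ℝ) := {R.x + R.w} ×ˢ Set.Icc R.y (R.y + R.h)

/-- The bottom side `[x, x+w] × {y}`. -/
def bottomSide (R : PRect) : Set (ℝ × ℝ) := Set.Icc R.x (R.x + R.w) ×ˢ {R.y}

/-- The top side `[x, x+w] × {y+h}`. -/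
def topSide (R : PRect) : Set (ℝ × ℝ) := Set.Icc R.x (R.x + R.w) ×ˢ {R.y + R.h}

end PRect

/-- The box `[0, N1] × [0, N2]`. -/
def box (N1 N2 : ℝ) : Set (ℝ × ℝ) := Set.Icc 0 N1 ×ˢ Set.Icc 0 N2

/-- The placed rectangle `[-1, 0] × [0, N2]` associated with the left side of the box. -/
def Rleft (N2 : ℝ) : PRect := ⟨-1, 0, 1, N2⟩

/-- The placed rectangle `[N1, N1+1] × [0, N2]` associated with the right side of the box. -/
def Rright (N1 N2 : ℝ) : PRect := ⟨N1, 0, 1, N2⟩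

/-- `R` sees `R'` from the left: `x(R) + w(R) ≤ x(R')` and there is a height `yy`,
strictly inside the vertical extents of both `R` and `R'`, such that the horizontal
segment `[x(R)+w(R), x(R')] × {yy}` is disjoint from every rectangle of the
packing `Q` other than `R` and `R'`. -/
def SeesDir (Q : Set PRect) (R R' : PRect) : Prop :=
  R.x + R.w ≤ R'.x ∧ ∃ yy : ℝ,
    R.y < yy ∧ yy < R.y + R.h ∧ R'.y < yy ∧ yy < R'.y + R'.h ∧
    ∀ T ∈ Q, T ≠ R → T ≠ R' →
      ∀ xx : ℝ, R.x + R.w ≤ xx → xx ≤ R'.x → (xx, yy) ∉ T.toSet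

/-- Two distinct placed rectangles see each other (in the packing `Q`). -/
def Sees (Q : Set PRect) (R R' : PRect) : Prop :=
  R ≠ R' ∧ (SeesDir Q R R' ∨ SeesDir Q R' R)

/-- Adjacency in the conflict graph of the packing `Q` inside `[0,N1] × [0,N2]`:
the vertices are the rectangles of `Q` together with `Rleft N2` (the vertex `s`) and
`Rright N1 N2` (the vertex `t`); two vertices are adjacent iff they see each other,
except that the left and right sides are not adjacent to each other. -/
def ConflictAdj (N1 N2 : ℝ) (Q : Set PRect) (u v : PRect) : Prop :=
  u ∈ Q ∪ {Rleft N2, Rright N1 N2} ∧ v ∈ Q ∪ {Rleft N2, Rright N1 N2} ∧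
  ¬ (u ∈ ({Rleft N2, Rright N1 N2} : Set PRect) ∧
     v ∈ ({Rleft N2, Rright N1 N2} : Set PRect)) ∧
  Sees Q u v

/-- The center of a placed rectangle. In particular the center of `Rleft N2` is
`(-1/2, N2/2)` and the center of `Rright N1 N2` is `(N1 + 1/2, N2/2)`. -/
noncomputable def PRect.center (R : PRect) : ℝ × ℝ := (R.x + R.w / 2, R.y + R.h / 2)

/-- `C` is an `st`-separator in the conflict graph of `Q`: `C ⊆ Q` and every path from
`s = Rleft N2` to `t = Rright N1 N2` in the conflict graph contains a vertex of `C`. -/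
def IsSTSeparator (N1 N2 : ℝ) (Q : Set PRect) (C : Set PRect) : Prop :=
  C ⊆ Q ∧
  ∀ (n : ℕ) (v : Fin (n + 1) → PRect),
    Function.Injective v →
    v 0 = Rleft N2 → v (Fin.last n) = Rright N1 N2 →
    (∀ i : Fin n, ConflictAdj N1 N2 Q (v i.castSucc) (v i.succ)) →
    ∃ i, v i ∈ C

/-- The negatively shifted zone `←Z⟨ℓ⟩ = (⋃_{(x,y)∈Z} [x−ℓ,x] × {y}) ∩ ([0,N1−ℓ] × [0,N2])`. -/
def shiftNeg (Z : Set (ℝ × ℝ)) (ℓ N1 N2 : ℝ) : Set (ℝ × ℝ) :=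
  {p | ∃ x : ℝ, (x, p.2) ∈ Z ∧ x - ℓ ≤ p.1 ∧ p.1 ≤ x} ∩
    (Set.Icc 0 (N1 - ℓ) ×ˢ Set.Icc 0 N2)

/-- The positively shifted zone `→Z⟨ℓ⟩ = (⋃_{(x,y)∈Z} [x,x+ℓ] × {y}) ∩ ([0,N1] × [0,N2])`. -/
def shiftPos (Z : Set (ℝ × ℝ)) (ℓ N1 N2 : ℝ) : Set (ℝ × ℝ) :=
  {p | ∃ x : ℝ, (x, p.2) ∈ Z ∧ x ≤ p.1 ∧ p.1 ≤ x + ℓ} ∩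
    (Set.Icc 0 N1 ×ˢ Set.Icc 0 N2)

/-- The rounded zone `↔Z⟨ℓ⟩ = (⋃_{(x,y)∈Z} [x−ℓ,x+ℓ] × {y}) ∩ ([0,N1] × [0,N2])`. -/
def shiftBoth (Z : Set (ℝ × ℝ)) (ℓ N1 N2 : ℝ) : Set (ℝ × ℝ) :=
  {p | ∃ x : ℝ, (x, p.2) ∈ Z ∧ x - ℓ ≤ p.1 ∧ p.1 ≤ x + ℓ} ∩
    (Set.Icc 0 N1 ×ˢ Set.Icc 0 N2)

/-- The family of rectangles indexed by `F`, where the member indexed by `R ∈ F` has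
width `dw R` and height `dh R`, can be packed inside the zone `Z`: there is an
assignment of pairwise non-overlapping placed rectangles of these dimensions, each
contained in `Z`. -/
def CanPackDims (F : Set PRect) (dw dh : PRect → ℝ) (Z : Set (ℝ × ℝ)) : Prop :=
  ∃ f : PRect → PRect,
    (∀ R ∈ F, (f R).w = dw R ∧ (f R).h = dh R ∧ (f R).toSet ⊆ Z) ∧
    ∀ R ∈ F, ∀ R' ∈ F, R ≠ R' → ¬ (f R).Overlap (f R')

/-!
Call a rectangle of `Q \ C` *right* if it reaches the right side in the conflict graph with
the vertices of `C` removed; as `C` separates the two sides, no right rectangle sees the left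
side. Two rectangles of `Q` facing each other across a horizontal gap narrower than `2ℓ` see each
other, since no rectangle of `Q` fits in the gap. Hence a right rectangle is at distance `≥ 2ℓ`
from the left side, any other rectangle is at distance `≥ 2ℓ` from the right side, and a
non-right rectangle lying left of a right one on a common horizontal line is at distance `≥ 2ℓ`
from it. Round every width up to a multiple of `ℓ' = ℓ²/N1`, which adds less than `ℓ'`; move
right rectangles left and the others right by less than `ℓ/2`, by one quantum `ℓ'` per `2ℓ` of
distance to the side they move away from. On every horizontal line this keeps the left-to-right
order, and every rectangle stays within `ℓ` of its old position, hence inside `↔Z⟨ℓ⟩`.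
-/

open Set

namespace PRect

variable {R R' : PRect}

theorem overlap_iff (hR : R.Proper) (hR' : R'.Proper) :
    R.Overlap R' ↔
      R.x < R'.x + R'.w ∧ R'.x < R.x + R.w ∧ R.y < R'.y + R'.h ∧ R'.y < R.y + R.h := by
  obtain ⟨hw, hh⟩ := hR
  obtain ⟨hw', hh'⟩ := hR'
  simp only [Overlap, inter, prod_inter_prod, prod_nonempty_iff, Ioo_inter_Ioo, nonempty_Ioo,
    max_lt_iff, lt_min_iff]
  constructor
  · tauto
  · rintro ⟨h1, h2, h3, h4⟩
    exact ⟨⟨⟨by linarith, h2⟩, h1, by linarith⟩, ⟨by linarith, h4⟩, h3, by linarith⟩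

theorem le_or_le_of_not_overlap (hR : R.Proper) (hR' : R'.Proper) (h : ¬ R.Overlap R')
    (hy : R.y < R'.y + R'.h) (hy' : R'.y < R.y + R.h) :
    R.x + R.w ≤ R'.x ∨ R'.x + R'.w ≤ R.x := by
  by_contra! hx
  exact h ((overlap_iff hR hR').2 ⟨hx.2, hx.1, hy, hy'⟩)

theorem bounds_of_toSet_subset_box {N1 N2 : ℝ} (hR : R.Proper) (h : R.toSet ⊆ box N1 N2) :
    0 ≤ R.x ∧ R.x + R.w ≤ N1 ∧ 0 ≤ R.y ∧ R.y + R.h ≤ N2 := by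
  have hlo := h (show (R.x, R.y) ∈ R.toSet from
    ⟨⟨le_rfl, by linarith [hR.1]⟩, le_rfl, by linarith [hR.2]⟩)
  have hhi := h (show (R.x + R.w, R.y + R.h) ∈ R.toSet from
    ⟨⟨by linarith [hR.1], le_rfl⟩, by linarith [hR.2], le_rfl⟩)
  exact ⟨hlo.1.1, hhi.1.2, hlo.2.1, hhi.2.2⟩

theorem toSet_subset_shiftBoth {Z : Set (ℝ × ℝ)} {ℓ N1 N2 : ℝ} (hℓ : 0 ≤ ℓ)
    (hZ : Z ⊆ box N1 N2) (hR : R.toSet ⊆ Z) (hw : 0 ≤ R.w) (hy : R'.y = R.y) (hh : R'.h = R.h)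
    (hl : R.x - ℓ ≤ R'.x) (hr : R'.x + R'.w ≤ R.x + R.w + ℓ) (h0 : 0 ≤ R'.x)
    (hN : R'.x + R'.w ≤ N1) : R'.toSet ⊆ shiftBoth Z ℓ N1 N2 := by
  rintro ⟨p, q⟩ ⟨⟨hp, hp'⟩, hq, hq'⟩
  dsimp only at hp hp' hq hq'
  rw [hy] at hq
  rw [hy, hh] at hq'
  have hxZ : (max R.x (min p (R.x + R.w)), q) ∈ Z :=
    hR ⟨⟨le_max_left _ _, max_le (by linarith) (min_le_right _ _)⟩, hq, hq'⟩
  refine ⟨⟨_, hxZ, ?_, ?_⟩, ⟨by linarith, by linarith⟩, (hZ hxZ).2⟩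
  · have : max R.x (min p (R.x + R.w)) ≤ p + ℓ :=
      max_le (by linarith) ((min_le_left _ _).trans (by linarith))
    linarith
  · have : p - ℓ ≤ min p (R.x + R.w) := le_min (by linarith) (by linarith)
    linarith [le_max_right R.x (min p (R.x + R.w))]

theorem not_overlap_Rleft {N1 N2 : ℝ} (hN2 : 0 < N2) {T : PRect} (hT : T.Proper)
    (hbox : T.toSet ⊆ box N1 N2) : ¬ T.Overlap (Rleft N2) := fun h => by
  have hx : T.x < -1 + 1 := ((overlap_iff hT ⟨one_pos, hN2⟩).1 h).1
  linarith [(bounds_of_toSet_subset_box hT hbox).1]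

theorem not_overlap_Rright {N1 N2 : ℝ} (hN2 : 0 < N2) {T : PRect} (hT : T.Proper)
    (hbox : T.toSet ⊆ box N1 N2) : ¬ T.Overlap (Rright N1 N2) := fun h => by
  have hx : N1 < T.x + T.w := ((overlap_iff hT ⟨one_pos, hN2⟩).1 h).2.1
  linarith [(bounds_of_toSet_subset_box hT hbox).2.1]

end PRect

section Visibility

variable {N1 N2 d : ℝ} {Q : Set PRect} {R R' : PRect}

theorem Sees.symm (h : Sees Q R R') : Sees Q R' R :=
  ⟨h.1.symm, h.2.symm⟩

theorem SeesDir.sees (hR : 0 < R.w) (h : SeesDir Q R R') : Sees Q R R' :=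
  ⟨by rintro rfl; linarith [h.1], Or.inl h⟩

/-- Any rectangle of `Q` met by the segment either overlaps `R` or `R'`, or fits in the gap. -/
theorem seesDir_of_gap_lt (hproper : ∀ T ∈ Q, T.Proper) (hwidth : ∀ T ∈ Q, d ≤ T.w)
    (hR : R.Proper) (hR' : R'.Proper)
    (hdisj : ∀ T ∈ Q, T ≠ R → T ≠ R' → ¬ T.Overlap R ∧ ¬ T.Overlap R')
    (hle : R.x + R.w ≤ R'.x) (hgap : R'.x < R.x + R.w + d)
    (hy : R.y < R'.y + R'.h) (hy' : R'.y < R.y + R.h) : SeesDir Q R R' := by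
  have hlt : max R.y R'.y < min (R.y + R.h) (R'.y + R'.h) := by
    simp only [max_lt_iff, lt_min_iff]
    refine ⟨⟨?_, ?_⟩, ?_, ?_⟩ <;> linarith [hR.2, hR'.2]
  obtain ⟨yy, hyy, hyy'⟩ := exists_between hlt
  simp only [max_lt_iff, lt_min_iff] at hyy hyy'
  refine ⟨hle, yy, hyy.1, hyy'.1, hyy.2, hyy'.2, fun T hT hTR hTR' xx hxx hxx' hmem => ?_⟩
  obtain ⟨⟨hTx, hTx'⟩, hTy, hTy'⟩ := hmem
  dsimp only at hTx hTx' hTy hTy'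
  have hTp := hproper T hT
  by_cases hleft : T.x < R.x + R.w
  · exact (hdisj T hT hTR hTR').1
      ((PRect.overlap_iff hTp hR).2 ⟨hleft, by linarith [hR.1], by linarith, by linarith⟩)
  by_cases hright : R'.x < T.x + T.w
  · exact (hdisj T hT hTR hTR').2
      ((PRect.overlap_iff hTp hR').2 ⟨by linarith [hR'.1], hright, by linarith, by linarith⟩)
  linarith [hwidth T hT]

theorem seesDir_Rleft_of_x_lt (hN2 : 0 < N2) (hproper : ∀ T ∈ Q, T.Proper)
    (hpack : ∀ T ∈ Q, ∀ T' ∈ Q, T ≠ T' → ¬ T.Overlap T')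
    (hbox : ∀ T ∈ Q, T.toSet ⊆ box N1 N2) (hwidth : ∀ T ∈ Q, d ≤ T.w)
    (hR : R ∈ Q) (hx : R.x < d) : SeesDir Q (Rleft N2) R := by
  obtain ⟨hx0, -, hy0, hyN⟩ := PRect.bounds_of_toSet_subset_box (hproper R hR) (hbox R hR)
  have hh := (hproper R hR).2
  refine seesDir_of_gap_lt hproper hwidth ⟨one_pos, hN2⟩ (hproper R hR)
    (fun T hT _ hTR => ⟨PRect.not_overlap_Rleft hN2 (hproper T hT) (hbox T hT),
      hpack T hT R hR hTR⟩) ?_ ?_ ?_ ?_ <;> simp only [Rleft] <;> linarith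

theorem seesDir_Rright_of_lt_add (hN2 : 0 < N2) (hproper : ∀ T ∈ Q, T.Proper)
    (hpack : ∀ T ∈ Q, ∀ T' ∈ Q, T ≠ T' → ¬ T.Overlap T')
    (hbox : ∀ T ∈ Q, T.toSet ⊆ box N1 N2) (hwidth : ∀ T ∈ Q, d ≤ T.w)
    (hR : R ∈ Q) (hx : N1 < R.x + R.w + d) : SeesDir Q R (Rright N1 N2) := by
  obtain ⟨-, hxN, hy0, hyN⟩ := PRect.bounds_of_toSet_subset_box (hproper R hR) (hbox R hR)
  have hh := (hproper R hR).2
  refine seesDir_of_gap_lt hproper hwidth (hproper R hR) ⟨one_pos, hN2⟩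
    (fun T hT hTR _ => ⟨hpack T hT R hR hTR,
      PRect.not_overlap_Rright hN2 (hproper T hT) (hbox T hT)⟩) ?_ ?_ ?_ ?_ <;>
    simp only [Rright] <;> linarith

end Visibility

section Rounding

variable {c δ a b w ℓ N1 : ℝ}

noncomputable def roundUp (c w : ℝ) : ℝ := c * ⌈w / c⌉

theorem le_roundUp (hc : 0 < c) : w ≤ roundUp c w :=
  (div_le_iff₀' hc).1 (Int.le_ceil _)

theorem roundUp_lt (hc : 0 < c) : roundUp c w < w + c := by
  have h := mul_lt_mul_of_pos_left (Int.ceil_lt_add_one (w / c)) hc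
  rwa [mul_add, mul_div_cancel₀ _ hc.ne', mul_one] at h

noncomputable def stepShift (c δ a : ℝ) : ℝ := ⌊a / c⌋₊ * δ

theorem stepShift_nonneg (hδ : 0 ≤ δ) : 0 ≤ stepShift c δ a := by
  unfold stepShift; positivity

theorem stepShift_add_le (hc : 0 < c) (hδ : 0 ≤ δ) (ha : 0 ≤ a) (hab : a + c ≤ b) :
    stepShift c δ a + δ ≤ stepShift c δ b := by
  have hfloor : ⌊a / c⌋₊ + 1 ≤ ⌊b / c⌋₊ := by
    rw [← Nat.floor_add_one (by positivity)]
    refine Nat.floor_mono ?_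
    rwa [div_add_one hc.ne', div_le_div_iff_of_pos_right hc]
  unfold stepShift
  calc (⌊a / c⌋₊ : ℝ) * δ + δ = ((⌊a / c⌋₊ + 1 : ℕ) : ℝ) * δ := by push_cast; ring
    _ ≤ ⌊b / c⌋₊ * δ := by gcongr

theorem stepShift_le_half (hℓ : 0 < ℓ) (hN1 : 0 < N1) (ha : 0 ≤ a) (haN : a ≤ N1) :
    stepShift (2 * ℓ) (ℓ ^ 2 / N1) a ≤ ℓ / 2 :=
  calc stepShift (2 * ℓ) (ℓ ^ 2 / N1) a ≤ a / (2 * ℓ) * (ℓ ^ 2 / N1) := by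
        unfold stepShift; gcongr; exact Nat.floor_le (by positivity)
    _ ≤ N1 / (2 * ℓ) * (ℓ ^ 2 / N1) := by gcongr
    _ = ℓ / 2 := by field_simp

end Rounding

def PRect.WideIn (ℓ N1 : ℝ) (R : PRect) : Prop := 0 ≤ R.x ∧ 2 * ℓ ≤ R.w ∧ R.x + R.w ≤ N1

namespace PRect.WideIn

variable {ℓ N1 a : ℝ} {R : PRect}

theorem quantum_pos (hR : R.WideIn ℓ N1) (hℓ : 0 < ℓ) : 0 < ℓ ^ 2 / N1 := by
  have : 0 < N1 := by linarith [hR.1, hR.2.1, hR.2.2]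
  positivity

theorem stepShift_add_roundUp_le (hR : R.WideIn ℓ N1) (hℓ : 0 < ℓ) (ha : 0 ≤ a)
    (haN : a ≤ N1) :
    stepShift (2 * ℓ) (ℓ ^ 2 / N1) a + roundUp (ℓ ^ 2 / N1) R.w ≤ R.w + ℓ := by
  have ⟨hx0, hw, hxN⟩ := hR
  have hN1 : 0 < N1 := by linarith
  have hquantum : ℓ ^ 2 / N1 ≤ ℓ / 2 := by
    rw [div_le_div_iff₀ hN1 two_pos]; nlinarith
  linarith [stepShift_le_half hℓ hN1 ha haN, roundUp_lt (w := R.w) (hR.quantum_pos hℓ)]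

end PRect.WideIn

section Placement

variable {ℓ N1 N2 : ℝ} {P : PRect → Prop} {R R' : PRect}

open Classical in
/-- The shift grows by one quantum `ℓ²/N1` per `2ℓ` of distance to the side of the box the
rectangle moves away from; since consecutive rectangles of a row are at least `2ℓ` apart, each
gains on its predecessor the quantum that rounding may add to the predecessor's width. -/
noncomputable def roundedPlacement (ℓ N1 : ℝ) (P : PRect → Prop) (R : PRect) : PRect :=
  if P R then
    ⟨R.x + R.w - roundUp (ℓ ^ 2 / N1) R.w - stepShift (2 * ℓ) (ℓ ^ 2 / N1) (N1 - (R.x + R.w)),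
      R.y, roundUp (ℓ ^ 2 / N1) R.w, R.h⟩
  else ⟨R.x + stepShift (2 * ℓ) (ℓ ^ 2 / N1) R.x, R.y, roundUp (ℓ ^ 2 / N1) R.w, R.h⟩

@[simp] theorem roundedPlacement_y : (roundedPlacement ℓ N1 P R).y = R.y := by
  unfold roundedPlacement; split_ifs <;> rfl

@[simp] theorem roundedPlacement_w :
    (roundedPlacement ℓ N1 P R).w = roundUp (ℓ ^ 2 / N1) R.w := by
  unfold roundedPlacement; split_ifs <;> rfl

@[simp] theorem roundedPlacement_h : (roundedPlacement ℓ N1 P R).h = R.h := by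
  unfold roundedPlacement; split_ifs <;> rfl

theorem roundedPlacement_x_of_pos (h : P R) :
    (roundedPlacement ℓ N1 P R).x = R.x + R.w - roundUp (ℓ ^ 2 / N1) R.w -
      stepShift (2 * ℓ) (ℓ ^ 2 / N1) (N1 - (R.x + R.w)) := by
  simp [roundedPlacement, h]

theorem roundedPlacement_x_of_neg (h : ¬ P R) :
    (roundedPlacement ℓ N1 P R).x = R.x + stepShift (2 * ℓ) (ℓ ^ 2 / N1) R.x := by
  simp [roundedPlacement, h]

theorem roundedPlacement_proper (hR : R.Proper) (hq : 0 < ℓ ^ 2 / N1) :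
    (roundedPlacement ℓ N1 P R).Proper := by
  simp only [PRect.Proper, roundedPlacement_w, roundedPlacement_h]
  exact ⟨hR.1.trans_le (le_roundUp hq), hR.2⟩

theorem roundedPlacement_toSet_subset {Z : Set (ℝ × ℝ)} (hℓ : 0 < ℓ) (hZ : Z ⊆ box N1 N2)
    (hRZ : R.toSet ⊆ Z) (hR : R.WideIn ℓ N1) (hleft : P R → 2 * ℓ ≤ R.x)
    (hright : ¬ P R → R.x + R.w + 2 * ℓ ≤ N1) :
    (roundedPlacement ℓ N1 P R).toSet ⊆ shiftBoth Z ℓ N1 N2 := by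
  have hq := hR.quantum_pos hℓ
  have ⟨hx0, hw, hxN⟩ := hR
  by_cases hP : P R
  · have hx := roundedPlacement_x_of_pos (ℓ := ℓ) (N1 := N1) hP
    have := hR.stepShift_add_roundUp_le hℓ (a := N1 - (R.x + R.w)) (by linarith) (by linarith)
    have := stepShift_nonneg (c := 2 * ℓ) (a := N1 - (R.x + R.w)) hq.le
    refine PRect.toSet_subset_shiftBoth hℓ.le hZ hRZ (by linarith) roundedPlacement_y
      roundedPlacement_h ?_ ?_ ?_ ?_ <;> simp only [hx, roundedPlacement_w] <;>
      linarith [hleft hP]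
  · have hx := roundedPlacement_x_of_neg (ℓ := ℓ) (N1 := N1) hP
    have := hR.stepShift_add_roundUp_le hℓ (a := R.x) hx0 (by linarith)
    have := stepShift_nonneg (c := 2 * ℓ) (a := R.x) hq.le
    refine PRect.toSet_subset_shiftBoth hℓ.le hZ hRZ (by linarith) roundedPlacement_y
      roundedPlacement_h ?_ ?_ ?_ ?_ <;> simp only [hx, roundedPlacement_w] <;>
      linarith [hright hP]

theorem roundedPlacement_right_le_left (hℓ : 0 < ℓ) (hR : R.WideIn ℓ N1)
    (hR' : R'.WideIn ℓ N1) (hle : R.x + R.w ≤ R'.x)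
    (hcross : ¬ P R → P R' → R.x + R.w + 2 * ℓ ≤ R'.x) :
    (roundedPlacement ℓ N1 P R).x + (roundedPlacement ℓ N1 P R).w ≤
      (roundedPlacement ℓ N1 P R').x := by
  have hq := hR.quantum_pos hℓ
  have ⟨hx0, hw, hxN⟩ := hR
  have ⟨hx0', hw', hxN'⟩ := hR'
  have hsR := stepShift_nonneg (c := 2 * ℓ) (a := N1 - (R.x + R.w)) hq.le
  have hsL' := stepShift_nonneg (c := 2 * ℓ) (a := R'.x) hq.le
  rw [roundedPlacement_w]
  by_cases hP : P R <;> by_cases hP' : P R'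
  · rw [roundedPlacement_x_of_pos hP, roundedPlacement_x_of_pos hP']
    linarith [roundUp_lt (w := R'.w) hq, stepShift_add_le (show 0 < 2 * ℓ by linarith) hq.le
      (show 0 ≤ N1 - (R'.x + R'.w) by linarith) (show _ ≤ N1 - (R.x + R.w) by linarith)]
  · rw [roundedPlacement_x_of_pos hP, roundedPlacement_x_of_neg hP']
    linarith
  · rw [roundedPlacement_x_of_neg hP, roundedPlacement_x_of_pos hP']
    linarith [hcross hP hP', hR.stepShift_add_roundUp_le hℓ hx0 (by linarith),
      hR'.stepShift_add_roundUp_le hℓ (a := N1 - (R'.x + R'.w)) (by linarith) (by linarith)]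
  · rw [roundedPlacement_x_of_neg hP, roundedPlacement_x_of_neg hP']
    linarith [roundUp_lt (w := R.w) hq,
      stepShift_add_le (show 0 < 2 * ℓ by linarith) hq.le hx0 (show R.x + 2 * ℓ ≤ R'.x by linarith)]

end Placement

theorem canPackDims_roundedPlacement {ℓ N1 N2 : ℝ} (hℓ : 0 < ℓ) {Z : Set (ℝ × ℝ)}
    (hZ : Z ⊆ box N1 N2) {F : Set PRect} (hproper : ∀ R ∈ F, R.Proper)
    (hpack : ∀ R ∈ F, ∀ R' ∈ F, R ≠ R' → ¬ R.Overlap R') (hin : ∀ R ∈ F, R.toSet ⊆ Z)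
    (hwidth : ∀ R ∈ F, 2 * ℓ ≤ R.w) (P : PRect → Prop)
    (hleft : ∀ R ∈ F, P R → 2 * ℓ ≤ R.x)
    (hright : ∀ R ∈ F, ¬ P R → R.x + R.w + 2 * ℓ ≤ N1)
    (hcross : ∀ R ∈ F, ∀ R' ∈ F, ¬ P R → P R' → R.y < R'.y + R'.h → R'.y < R.y + R.h →
      R.x + R.w ≤ R'.x → R.x + R.w + 2 * ℓ ≤ R'.x) :
    CanPackDims F (fun R => roundUp (ℓ ^ 2 / N1) R.w) (fun R => R.h)
      (shiftBoth Z ℓ N1 N2) := by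
  have hwide : ∀ R ∈ F, R.WideIn ℓ N1 := fun R hR =>
    have hb := PRect.bounds_of_toSet_subset_box (hproper R hR) ((hin R hR).trans hZ)
    ⟨hb.1, hwidth R hR, hb.2.1⟩
  refine ⟨roundedPlacement ℓ N1 P, fun R hR => ⟨roundedPlacement_w, roundedPlacement_h,
    roundedPlacement_toSet_subset hℓ hZ (hin R hR) (hwide R hR) (hleft R hR) (hright R hR)⟩,
    fun R hR R' hR' hne hov => ?_⟩
  have hq := (hwide R hR).quantum_pos hℓ
  obtain ⟨hx, hx', hy, hy'⟩ := (PRect.overlap_iff (roundedPlacement_proper (hproper R hR) hq)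
    (roundedPlacement_proper (hproper R' hR') hq)).1 hov
  simp only [roundedPlacement_y, roundedPlacement_h] at hy hy'
  rcases PRect.le_or_le_of_not_overlap (hproper R hR) (hproper R' hR') (hpack R hR R' hR' hne)
    hy hy' with hle | hle
  · linarith [roundedPlacement_right_le_left (P := P) hℓ (hwide R hR) (hwide R' hR') hle
      (fun hP hP' => hcross R hR R' hR' hP hP' hy hy' hle)]
  · linarith [roundedPlacement_right_le_left (P := P) hℓ (hwide R' hR') (hwide R hR) hle
      (fun hP hP' => hcross R' hR' R hR hP hP' hy' hy hle)]

section ConflictGraph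

variable {N1 N2 : ℝ} {Q C : Set PRect} {u v : PRect}

theorem ConflictAdj.symm (h : ConflictAdj N1 N2 Q u v) : ConflictAdj N1 N2 Q v u :=
  ⟨h.2.1, h.1, fun h' => h.2.2.1 ⟨h'.2, h'.1⟩, h.2.2.2.1.symm, h.2.2.2.2.symm⟩

def conflictGraphAvoiding (N1 N2 : ℝ) (Q C : Set PRect) : SimpleGraph PRect where
  Adj u v := ConflictAdj N1 N2 Q u v ∧ u ∉ C ∧ v ∉ C
  symm := ⟨fun _ _ h => ⟨h.1.symm, h.2.2, h.2.1⟩⟩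
  loopless := ⟨fun _ h => h.1.2.2.2.1 rfl⟩

theorem conflictGraphAvoiding_adj_iff : (conflictGraphAvoiding N1 N2 Q C).Adj u v ↔
    ConflictAdj N1 N2 Q u v ∧ u ∉ C ∧ v ∉ C :=
  Iff.rfl

theorem notMem_sides {R : PRect} (hR : R.Proper) (hbox : R.toSet ⊆ box N1 N2) :
    R ∉ ({Rleft N2, Rright N1 N2} : Set PRect) := by
  have hb := PRect.bounds_of_toSet_subset_box hR hbox
  rintro (rfl | rfl) <;> simp only [Rleft, Rright] at hb <;> linarith [hb.1, hb.2.1]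

theorem conflictGraphAvoiding_adj
    (hsides : ∀ R ∈ Q, R ∉ ({Rleft N2, Rright N1 N2} : Set PRect)) (hu : u ∈ Q)
    (hv : v ∈ Q ∪ {Rleft N2, Rright N1 N2}) (huC : u ∉ C) (hvC : v ∉ C) (h : Sees Q u v) :
    (conflictGraphAvoiding N1 N2 Q C).Adj u v :=
  conflictGraphAvoiding_adj_iff.2 ⟨⟨Or.inl hu, hv, fun h' => hsides u hu h'.1, h⟩, huC, hvC⟩

theorem IsSTSeparator.not_reachable (hsep : IsSTSeparator N1 N2 Q C) (ht : Rright N1 N2 ∉ C) :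
    ¬ (conflictGraphAvoiding N1 N2 Q C).Reachable (Rleft N2) (Rright N1 N2) := by
  intro hreach
  obtain ⟨p, hp⟩ := hreach.exists_isPath
  obtain ⟨i, hi⟩ := hsep.2 p.length (fun i => p.getVert i)
    (fun i j hij => Fin.ext (hp.getVert_injOn (by simp; omega) (by simp; omega) hij))
    p.getVert_zero p.getVert_length
    (fun i => (conflictGraphAvoiding_adj_iff.1 (p.adj_getVert_succ i.2)).1)
  by_cases hlast : (i : ℕ) < p.length
  · exact (conflictGraphAvoiding_adj_iff.1 (p.adj_getVert_succ hlast)).2.1 hi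
  · rw [show (i : ℕ) = p.length by omega, p.getVert_length] at hi
    exact ht hi

end ConflictGraph

theorem pack_rounded_in_shiftBoth_general (N1 N2 ℓ : ℝ) (hN2 : 0 < N2)
    (hℓ : 0 < ℓ)
    (Z : Set (ℝ × ℝ)) (hZ : Z ⊆ box N1 N2)
    (Q : Set PRect)
    (hproper : ∀ R ∈ Q, R.Proper)
    (hpack : ∀ R ∈ Q, ∀ R' ∈ Q, R ≠ R' → ¬ R.Overlap R')
    (hin : ∀ R ∈ Q, R.toSet ⊆ Z)
    (hwidth : ∀ R ∈ Q, 2 * ℓ ≤ R.w)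
    (C : Set PRect) (hsep : IsSTSeparator N1 N2 Q C) :
    CanPackDims (Q \ C)
      (fun R => (ℓ ^ 2 / N1) * (⌈R.w / (ℓ ^ 2 / N1)⌉ : ℝ))
      (fun R => R.h)
      (shiftBoth Z ℓ N1 N2) := by
  have hbox : ∀ R ∈ Q, R.toSet ⊆ box N1 N2 := fun R hR => (hin R hR).trans hZ
  have hsides : ∀ R ∈ Q, R ∉ ({Rleft N2, Rright N1 N2} : Set PRect) :=
    fun R hR => notMem_sides (hproper R hR) (hbox R hR)
  have hsC : Rleft N2 ∉ C := fun h => hsides _ (hsep.1 h) (by simp)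
  have htC : Rright N1 N2 ∉ C := fun h => hsides _ (hsep.1 h) (by simp)
  set G := conflictGraphAvoiding N1 N2 Q C
  refine canPackDims_roundedPlacement hℓ hZ (fun R hR => hproper R hR.1)
    (fun R hR R' hR' => hpack R hR.1 R' hR'.1) (fun R hR => hin R hR.1)
    (fun R hR => hwidth R hR.1) (fun R => G.Reachable R (Rright N1 N2)) ?_ ?_ ?_
  · rintro R ⟨hRQ, hRC⟩ hreach
    by_contra! hx
    have hsees := (seesDir_Rleft_of_x_lt hN2 hproper hpack hbox hwidth hRQ hx).sees one_pos
    exact hsep.not_reachable htC <| (conflictGraphAvoiding_adj hsides hRQ (by simp) hRC hsC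
      hsees.symm).symm.reachable.trans hreach
  · rintro R ⟨hRQ, hRC⟩ hreach
    by_contra! hx
    have hsees := (seesDir_Rright_of_lt_add hN2 hproper hpack hbox hwidth hRQ hx).sees (hproper R hRQ).1
    exact hreach (conflictGraphAvoiding_adj hsides hRQ (by simp) hRC htC hsees).reachable
  · rintro R ⟨hRQ, hRC⟩ R' ⟨hR'Q, hR'C⟩ hP hP' hy hy' hle
    by_contra! hx
    have hsees := (seesDir_of_gap_lt hproper hwidth (hproper R hRQ) (hproper R' hR'Q)
      (fun T hT h h' => ⟨hpack T hT R hRQ h, hpack T hT R' hR'Q h'⟩) hle hx hy hy').sees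
      (hproper R hRQ).1
    exact hP <|
      (conflictGraphAvoiding_adj hsides hRQ (Or.inl hR'Q) hRC hR'C hsees).reachable.trans hP'

/-- If `Q` is a packing inside a zone `Z ⊆ B` with all widths at least `2ℓ` and `C` is
an `st`-separator in the conflict graph of `Q`, then the `ℓ`-rounded versions of the
rectangles of `Q \ C` (width `w` replaced by `ℓ'·⌈w/ℓ'⌉` where `ℓ' = ℓ²/N1`, height
unchanged) can be packed inside the rounded zone `↔Z⟨ℓ⟩`. -/
theorem pack_rounded_in_shiftBoth (N1 N2 ℓ : ℝ) (hN1 : 0 < N1) (hN2 : 0 < N2)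
    (hℓ : 0 < ℓ)
    (Z : Set (ℝ × ℝ)) (hZ : Z ⊆ box N1 N2)
    (Q : Set PRect) (hfin : Q.Finite)
    (hproper : ∀ R ∈ Q, R.Proper)
    (hpack : ∀ R ∈ Q, ∀ R' ∈ Q, R ≠ R' → ¬ R.Overlap R')
    (hin : ∀ R ∈ Q, R.toSet ⊆ Z)
    (hwidth : ∀ R ∈ Q, 2 * ℓ ≤ R.w)
    (C : Set PRect) (hsep : IsSTSeparator N1 N2 Q C) :
    CanPackDims (Q \ C)
      (fun R => (ℓ ^ 2 / N1) * (⌈R.w / (ℓ ^ 2 / N1)⌉ : ℝ))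
      (fun R => R.h)
      (shiftBoth Z ℓ N1 N2) :=
  pack_rounded_in_shiftBoth_general N1 N2 ℓ hN2 hℓ Z hZ Q hproper hpack hin hwidth C hsep
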